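/- arXiv:0810.4218 — 3 statements merged into one kernel-verified Lean document; each statement's English description precedes it below -/
import Mathlib

section
/- Let (Z_t)_{t∈ℕ} be an integrable adapted process and suppose there is a constant c₁ ∈ (0,∞) such that ΔZ_t − P[ΔZ_t | F_{t−1}] ≥ −c₁ a.s. for all t ≥ 1. Then, up to P-null sets, { lim_{t→∞} Z_t = ∞ } = { lim_{t→∞} Z_t = ∞ and limsup_{t→∞} A_t/Z_t ≥ 1 } ⊂ { sup_{t≥1} A_t = ∞ }. -/
open MeasureTheory ProbabilityTheory Filter Topology
open scoped ENNReal NNReal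

/-!
Doob's decomposition writes `Z = M + A` with `M` a martingale whose increments
`ΔZ_t - P[ΔZ_t | F_{t-1}]` are bounded below by `-c₁`. By the one-sided martingale bound
(a submartingale with increments bounded above converges wherever it is bounded above, which one
sees by stopping it when it first exceeds a level: the stopped process is bounded in `L¹`),
applied to `M 0 - M`, almost surely `M` does not tend to `+∞`. So on `{Z → ∞}` there is a `C`
with `Z t - A t < C` for infinitely many `t`; along these times `A t > Z t - C` is unbounded and
`A t / Z t > 1 - C / Z t` eventually exceeds `1 - ε`.
-/

namespace GenBC

variable {Ω : Type*} {m0 : MeasurableSpace Ω}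

/-- The compensator `A_t = Σ_{s=1}^t P[ΔZ_s | F_{s-1}]` of an adapted process `Z`. -/
noncomputable def comp (P : Measure Ω) (F : Filtration ℕ m0) (Z : ℕ → Ω → ℝ)
    (t : ℕ) (ω : Ω) : ℝ :=
  ∑ s ∈ Finset.range t, (P[fun ω => Z (s + 1) ω - Z s ω | F s]) ω

end GenBC

section RealSequences

variable {Z A : ℕ → ℝ} {C : ℝ}

theorem le_max_of_forall_lt_of_sub_le {g : ℕ → ℝ} {r R : ℝ} {k : ℕ}
    (hlt : ∀ j < k, g j < r) (hbdd : ∀ j, g (j + 1) - g j ≤ R) : g k ≤ max (g 0) (r + R) := by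
  rcases k with _ | k
  · exact le_max_left _ _
  · exact le_max_of_le_right (by linarith [hlt k k.lt_succ_self, hbdd k])

theorem not_bddAbove_range_of_frequently_sub_lt (hZ : Tendsto Z atTop atTop)
    (hC : ∃ᶠ t in atTop, Z t - A t < C) : ¬BddAbove (Set.range A) := by
  rintro ⟨b, hb⟩
  obtain ⟨t, hZA, hZt⟩ := (hC.and_eventually (hZ.eventually_gt_atTop (b + C))).exists
  linarith [hb ⟨t, rfl⟩]

theorem frequently_one_sub_lt_div_of_frequently_sub_lt (hZ : Tendsto Z atTop atTop)
    (hC : ∃ᶠ t in atTop, Z t - A t < C) {ε : ℝ} (hε : 0 < ε) :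
    ∃ᶠ t in atTop, 1 - ε < A t / Z t := by
  have hZ_large := (hZ.eventually_gt_atTop 0).and (hZ.eventually_gt_atTop (C / ε))
  refine (hC.and_eventually hZ_large).mono ?_
  rintro t ⟨hZA, hZpos, hZC⟩
  rw [lt_div_iff₀ hZpos]
  rw [div_lt_iff₀ hε] at hZC
  linarith

end RealSequences

namespace MeasureTheory

variable {Ω : Type*} {m0 : MeasurableSpace Ω}

section OneSidedBound

variable {μ : Measure Ω} {ℱ : Filtration ℕ m0} {f : ℕ → Ω → ℝ} {R : ℝ}

theorem stoppedAbove_le_of_sub_le {ω : Ω} (r : ℝ) (hbdd : ∀ i, f (i + 1) ω - f i ω ≤ R)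
    (i : ℕ) : stoppedAbove f r i ω ≤ max (f 0 ω) (r + R) := by
  refine le_max_of_forall_lt_of_sub_le (g := fun n => f n ω) (fun j hj => ?_) hbdd
  have hne : min (i : WithTop ℕ) (leastGE f r ω) ≠ ⊤ :=
    (min_lt_of_left_lt (WithTop.coe_lt_top i)).ne
  have hj : (j : WithTop ℕ) < leastGE f r ω :=
    ((WithTop.lt_untopA_iff hne).1 hj).trans_le (min_le_right _ _)
  simpa using notMem_of_lt_hittingAfter hj bot_le

theorem Submartingale.eLpNorm_stoppedAbove_le_of_sub_le [IsFiniteMeasure μ]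
    (hf : Submartingale f ℱ μ) (hf0 : f 0 = 0) (hbdd : ∀ᵐ ω ∂μ, ∀ i, f (i + 1) ω - f i ω ≤ R)
    (r : ℝ) (i : ℕ) :
    eLpNorm (stoppedAbove f r i) 1 μ ≤ 2 * μ Set.univ * ENNReal.ofReal (max 0 (r + R)) := by
  refine eLpNorm_one_le_of_le' ((hf.stoppedAbove r).integrable i) ?_ ?_
  · simpa [stoppedAbove, stoppedProcess, hf0] using
      (hf.stoppedAbove r).setIntegral_le (Nat.zero_le i) MeasurableSet.univ
  · filter_upwards [hbdd] with ω hω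
    simpa [hf0] using stoppedAbove_le_of_sub_le r hω i

theorem Submartingale.exists_tendsto_of_bddAbove_of_sub_le [IsFiniteMeasure μ]
    (hf : Submartingale f ℱ μ) (hf0 : f 0 = 0) (hbdd : ∀ᵐ ω ∂μ, ∀ i, f (i + 1) ω - f i ω ≤ R) :
    ∀ᵐ ω ∂μ, BddAbove (Set.range fun n => f n ω) →
      ∃ c, Tendsto (fun n => f n ω) atTop (𝓝 c) := by
  have hstopped : ∀ᵐ ω ∂μ, ∀ r : ℕ, ∃ c, Tendsto (fun n => stoppedAbove f r n ω) atTop (𝓝 c) := by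
    refine ae_all_iff.2 fun r => (hf.stoppedAbove r).exists_ae_tendsto_of_bdd
      (R := (2 * μ Set.univ * ENNReal.ofReal (max 0 (r + R))).toNNReal) fun i => ?_
    rw [ENNReal.coe_toNNReal (by finiteness)]
    exact hf.eLpNorm_stoppedAbove_le_of_sub_le hf0 hbdd r i
  filter_upwards [hstopped] with ω hω ⟨b, hb⟩
  obtain ⟨r, hr⟩ := exists_nat_gt b
  have hlt : ∀ n, f n ω < r := fun n => (hb ⟨n, rfl⟩).trans_lt hr
  have hstop_eq : (fun n => stoppedAbove f r n ω) = fun n => f n ω := by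
    ext n
    have htop : leastGE f r ω = ⊤ := hittingAfter_eq_top_iff.2 fun j _ => by simpa using hlt j
    rw [stoppedAbove, stoppedProcess_eq_of_le (htop ▸ le_top)]
  simpa [hstop_eq] using hω r

theorem Supermartingale.ae_not_tendsto_atTop_of_le_sub [IsFiniteMeasure μ]
    (hf : Supermartingale f ℱ μ) (hbdd : ∀ᵐ ω ∂μ, ∀ i, -R ≤ f (i + 1) ω - f i ω) :
    ∀ᵐ ω ∂μ, ¬Tendsto (fun n => f n ω) atTop atTop := by
  set g : ℕ → Ω → ℝ := (fun _ => f 0) - f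
  have hg : Submartingale g ℱ μ :=
    (martingale_const_fun ℱ μ (hf.stronglyAdapted 0) (hf.integrable 0)).submartingale
      |>.sub_supermartingale hf
  have hg0 : g 0 = 0 := sub_self _
  have hgbdd : ∀ᵐ ω ∂μ, ∀ i, g (i + 1) ω - g i ω ≤ R := by
    filter_upwards [hbdd] with ω hω i
    simp only [g, Pi.sub_apply]
    linarith [hω i]
  filter_upwards [hg.exists_tendsto_of_bddAbove_of_sub_le hg0 hgbdd] with ω hω hf_top
  have hg_bot : Tendsto (fun n => g n ω) atTop atBot :=
    tendsto_atBot_add_const_left _ (f 0 ω) (tendsto_neg_atTop_atBot.comp hf_top)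
  obtain ⟨c, hc⟩ := hω (bddAbove_range_of_tendsto_atTop_atBot hg_bot)
  exact not_tendsto_nhds_of_tendsto_atBot hg_bot c hc

end OneSidedBound

theorem martingalePart_add_one_sub {E : Type*} [NormedAddCommGroup E]
    [NormedSpace ℝ E] {F : Filtration ℕ m0} {μ : Measure Ω} (f : ℕ → Ω → E) (n : ℕ) :
    martingalePart f F μ (n + 1) - martingalePart f F μ n =
      f (n + 1) - f n - μ[f (n + 1) - f n | F n] := by
  simp only [martingalePart, predictablePart_add_one]
  abel

end MeasureTheory

namespace GenBC

variable {Ω : Type*} {m0 : MeasurableSpace Ω}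

theorem comp_eq_predictablePart (P : Measure Ω) (F : Filtration ℕ m0) (Z : ℕ → Ω → ℝ) :
    comp P F Z = predictablePart Z F P := by
  ext t ω
  simp only [comp, predictablePart, Finset.sum_apply]
  rfl

theorem generalized_borel_cantelli_a_general
    (P : Measure Ω) [IsProbabilityMeasure P] (F : Filtration ℕ m0)
    (Z : ℕ → Ω → ℝ)
    (hadapt : Adapted F Z)
    (hint : ∀ t, Integrable (Z t) P)
    (c₁ : ℝ)
    (hlb : ∀ t : ℕ, ∀ᵐ ω ∂P,
      -c₁ ≤ (Z (t + 1) ω - Z t ω) - (P[fun ω => Z (t + 1) ω - Z t ω | F t]) ω) :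
    ∀ᵐ ω ∂P, Tendsto (fun t => Z t ω) atTop atTop →
      ((∀ ε : ℝ, 0 < ε → ∃ᶠ t in atTop, 1 - ε < comp P F Z t ω / Z t ω) ∧
        ¬ BddAbove (Set.range fun t => comp P F Z t ω)) := by
  set M := martingalePart Z F P
  have hM : Martingale M F P := martingale_martingalePart hadapt.stronglyAdapted hint
  have hMbdd : ∀ᵐ ω ∂P, ∀ t, -c₁ ≤ M (t + 1) ω - M t ω := by
    refine ae_all_iff.2 fun t => ?_
    simpa only [M, ← Pi.sub_apply, martingalePart_add_one_sub] using hlb t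
  filter_upwards [hM.supermartingale.ae_not_tendsto_atTop_of_le_sub hMbdd] with ω hω hZ
  obtain ⟨C, hC⟩ : ∃ C, ∃ᶠ t in atTop, Z t ω - comp P F Z t ω < C := by
    simpa only [tendsto_atTop, not_forall, not_eventually, not_le, M, martingalePart,
      Pi.sub_apply, ← comp_eq_predictablePart] using hω
  exact ⟨fun ε hε => frequently_one_sub_lt_div_of_frequently_sub_lt hZ hC hε,
    not_bddAbove_range_of_frequently_sub_lt hZ hC⟩

/-- **Lemma 2.3 a)** (generalized Borel–Cantelli): if `Z` is integrable and adapted with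
`ΔZ_t - P[ΔZ_t|F_{t-1}] ≥ -c₁` a.s., then a.s. on `{lim_t Z_t = ∞}` one has both
`limsup_t A_t/Z_t ≥ 1` (rendered: for every `ε > 0`, frequently `A_t/Z_t > 1 - ε`) and
`sup_t A_t = ∞`. -/
theorem generalized_borel_cantelli_a
    (P : Measure Ω) [IsProbabilityMeasure P] (F : Filtration ℕ m0)
    (Z : ℕ → Ω → ℝ)
    (hadapt : Adapted F Z)
    (hint : ∀ t, Integrable (Z t) P)
    (c₁ : ℝ) (hc₁ : 0 < c₁)
    (hlb : ∀ t : ℕ, ∀ᵐ ω ∂P,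
      -c₁ ≤ (Z (t + 1) ω - Z t ω) - (P[fun ω => Z (t + 1) ω - Z t ω | F t]) ω) :
    ∀ᵐ ω ∂P, Tendsto (fun t => Z t ω) atTop atTop →
      ((∀ ε : ℝ, 0 < ε → ∃ᶠ t in atTop, 1 - ε < comp P F Z t ω / Z t ω) ∧
        ¬ BddAbove (Set.range fun t => comp P F Z t ω)) :=
  generalized_borel_cantelli_a_general P F Z hadapt hint c₁ hlb

end GenBC
end

section
/- Let U_1,...,U_n (n ≥ 2) be independent nonnegative random variables with P[U_i³] < ∞ for all i and Σ_{i=1}^n m_i = 1, where m_i = P[U_i], and set U = Σ_{i=1}^n U_i. Then: (i) P[ U_1U_2/U² : U > 0 ] ≥ m_1 m_2 − 2 m_2 var(U_1) − 2 m_1 var(U_2); and (ii) P[ U_1²/U² : U > 0 ] ≥ P[U_1²](1 + 2m_1) − 2 P[U_1³]. -/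
/-!
For `s > 0` we have `1 / s² ≥ 3 - 2s`, i.e. `(s - 1)² (2s + 1) ≥ 0`. Hence, for `0 ≤ f ≤ U²`,
`P[f / U² : U > 0] ≥ P[f (3 - 2U)] = P[f] - 2 ∑ₖ (P[f Uₖ] - P[f] mₖ)`, using `∑ₖ mₖ = 1`.
For `f = U₁U₂` or `f = U₁²`, independence makes all these covariances vanish except those with
`k ∈ {1, 2}` (resp. `k = 1`), which are `m₂ var(U₁)`, `m₁ var(U₂)` (resp. `P[U₁³] - P[U₁²] m₁`).
-/

open MeasureTheory ProbabilityTheory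

lemma three_sub_two_mul_le_one_div_sq {s : ℝ} (hs : 0 < s) : 3 - 2 * s ≤ 1 / s ^ 2 := by
  rw [le_div_iff₀ (by positivity)]
  nlinarith [sq_nonneg (s - 1)]

lemma mul_mul_le_add_pow_three {a b c : ℝ} (ha : 0 ≤ a) (hb : 0 ≤ b) (hc : 0 ≤ c) :
    a * b * c ≤ a ^ 3 + b ^ 3 + c ^ 3 := by
  nlinarith [mul_nonneg (add_nonneg (add_nonneg ha hb) hc)
    (add_nonneg (add_nonneg (sq_nonneg (a - b)) (sq_nonneg (b - c))) (sq_nonneg (c - a))),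
    mul_nonneg (mul_nonneg ha hb) hc]

section Moments

variable {Ω ι : Type*} [MeasurableSpace Ω] {P : Measure Ω}

section Integrability

variable {X Y Z : Ω → ℝ}

lemma integrable_mul_mul_of_integrable_pow_three (hX : AEStronglyMeasurable X P)
    (hY : AEStronglyMeasurable Y P) (hZ : AEStronglyMeasurable Z P)
    (hX0 : ∀ ω, 0 ≤ X ω) (hY0 : ∀ ω, 0 ≤ Y ω) (hZ0 : ∀ ω, 0 ≤ Z ω)
    (hX3 : Integrable (fun ω => X ω ^ 3) P) (hY3 : Integrable (fun ω => Y ω ^ 3) P)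
    (hZ3 : Integrable (fun ω => Z ω ^ 3) P) :
    Integrable (fun ω => X ω * Y ω * Z ω) P :=
  ((hX3.add hY3).add hZ3).mono' ((hX.mul hY).mul hZ) <| ae_of_all _ fun ω => by
    rw [Real.norm_of_nonneg (by have := hX0 ω; have := hY0 ω; have := hZ0 ω; positivity)]
    exact mul_mul_le_add_pow_three (hX0 ω) (hY0 ω) (hZ0 ω)

lemma integrable_mul_of_integrable_pow_three [IsFiniteMeasure P] (hX : AEStronglyMeasurable X P)
    (hY : AEStronglyMeasurable Y P) (hX0 : ∀ ω, 0 ≤ X ω) (hY0 : ∀ ω, 0 ≤ Y ω)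
    (hX3 : Integrable (fun ω => X ω ^ 3) P) (hY3 : Integrable (fun ω => Y ω ^ 3) P) :
    Integrable (fun ω => X ω * Y ω) P := by
  simpa using integrable_mul_mul_of_integrable_pow_three hX hY aestronglyMeasurable_const
    hX0 hY0 (fun _ => zero_le_one) hX3 hY3 (by simp)

end Integrability

lemma integral_mul_three_sub_two_mul_le_integral_indicator_div_sq [IsFiniteMeasure P]
    {f S : Ω → ℝ} (hf : Measurable f) (hS : Measurable S) (hf0 : ∀ ω, 0 ≤ f ω)
    (hS0 : ∀ ω, 0 ≤ S ω) (hfS : ∀ ω, f ω ≤ S ω ^ 2)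
    (hint : Integrable (fun ω => f ω * (3 - 2 * S ω)) P) :
    ∫ ω, f ω * (3 - 2 * S ω) ∂P ≤ ∫ ω, {ω | 0 < S ω}.indicator (fun ω => f ω / S ω ^ 2) ω ∂P := by
  have hpos : MeasurableSet {ω | 0 < S ω} := measurableSet_lt measurable_const hS
  have hbound : ∀ ω, ‖{ω | 0 < S ω}.indicator (fun ω => f ω / S ω ^ 2) ω‖ ≤ 1 := fun ω => by
    by_cases hω : ω ∈ {ω | 0 < S ω}
    · rw [Set.indicator_of_mem hω, Real.norm_of_nonneg (div_nonneg (hf0 ω) (sq_nonneg _))]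
      exact div_le_one_of_le₀ (hfS ω) (sq_nonneg _)
    · simp [Set.indicator_of_notMem hω]
  have hint' : Integrable ({ω | 0 < S ω}.indicator (fun ω => f ω / S ω ^ 2)) P :=
    (integrable_const 1).mono' ((hf.div (hS.pow_const 2)).indicator hpos).aestronglyMeasurable
      (ae_of_all _ hbound)
  refine integral_mono hint hint' fun ω => ?_
  by_cases hω : ω ∈ {ω | 0 < S ω}
  · rw [Set.indicator_of_mem hω, div_eq_mul_one_div]
    exact mul_le_mul_of_nonneg_left (three_sub_two_mul_le_one_div_sq hω) (hf0 ω)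
  · have hSω : S ω = 0 := le_antisymm (not_lt.1 hω) (hS0 ω)
    have hfω : f ω = 0 := le_antisymm (by simpa [hSω] using hfS ω) (hf0 ω)
    simp [hω, hfω]

lemma integral_sub_two_mul_sum_le_integral_indicator_div_sq [Fintype ι] [IsFiniteMeasure P]
    {U : ι → Ω → ℝ} {f : Ω → ℝ} (hU : ∀ k, Measurable (U k)) (hU0 : ∀ k ω, 0 ≤ U k ω)
    (hf : Measurable f) (hf0 : ∀ ω, 0 ≤ f ω) (hfU : ∀ ω, f ω ≤ (∑ k, U k ω) ^ 2)
    (hfi : Integrable f P) (hfUi : ∀ k, Integrable (fun ω => f ω * U k ω) P)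
    (hm : ∑ k, ∫ ω, U k ω ∂P = 1) :
    ∫ ω, f ω ∂P - 2 * ∑ k, (∫ ω, f ω * U k ω ∂P - (∫ ω, f ω ∂P) * ∫ ω, U k ω ∂P) ≤
      ∫ ω, {ω | 0 < ∑ k, U k ω}.indicator (fun ω => f ω / (∑ k, U k ω) ^ 2) ω ∂P := by
  have hsumi : Integrable (fun ω => ∑ k, f ω * U k ω) P :=
    integrable_finsetSum _ fun k _ => hfUi k
  have hexpand : (fun ω => f ω * (3 - 2 * ∑ k, U k ω)) =
      fun ω => 3 * f ω - 2 * ∑ k, f ω * U k ω := by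
    funext ω
    rw [← Finset.mul_sum]
    ring
  have hint : Integrable (fun ω => f ω * (3 - 2 * ∑ k, U k ω)) P := by
    rw [hexpand]
    exact (hfi.const_mul 3).sub (hsumi.const_mul 2)
  calc _ = ∫ ω, f ω * (3 - 2 * ∑ k, U k ω) ∂P := by
        rw [hexpand, integral_sub (hfi.const_mul 3) (hsumi.const_mul 2), integral_const_mul,
          integral_const_mul, integral_finsetSum _ fun k _ => hfUi k, Finset.sum_sub_distrib,
          ← Finset.mul_sum, hm]
        ring
    _ ≤ _ := integral_mul_three_sub_two_mul_le_integral_indicator_div_sq hf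
        (Finset.measurable_sum _ fun k _ => hU k) hf0
        (fun ω => Finset.sum_nonneg fun k _ => hU0 k ω) hfU hint

namespace ProbabilityTheory

lemma IndepFun.integral_sq_mul_eq {X Y : Ω → ℝ} (h : IndepFun X Y P) (hX : Measurable X)
    (hY : Measurable Y) :
    ∫ ω, X ω ^ 2 * Y ω ∂P = (∫ ω, X ω ^ 2 ∂P) * ∫ ω, Y ω ∂P :=
  (h.comp (measurable_id.pow_const 2) measurable_id).integral_mul_eq_mul_integral
    (hX.pow_const 2).aestronglyMeasurable hY.aestronglyMeasurable

section Independent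

variable [Fintype ι] {U : ι → Ω → ℝ}

lemma iIndepFun.sum_integral_mul_mul_sub_eq (hindep : iIndepFun U P)
    (hU : ∀ k, Measurable (U k)) {i j : ι} (hij : i ≠ j) :
    ∑ k, (∫ ω, U i ω * U j ω * U k ω ∂P - (∫ ω, U i ω * U j ω ∂P) * ∫ ω, U k ω ∂P) =
      (∫ ω, U j ω ∂P) * (∫ ω, U i ω ^ 2 ∂P - (∫ ω, U i ω ∂P) ^ 2) +
        (∫ ω, U i ω ∂P) * (∫ ω, U j ω ^ 2 ∂P - (∫ ω, U j ω ∂P) ^ 2) := by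
  rw [Finset.sum_eq_add_of_mem i j (Finset.mem_univ i) (Finset.mem_univ j) hij fun k _ hk => ?_]
  · have hi : ∫ ω, U i ω * U j ω * U i ω ∂P = ∫ ω, U i ω ^ 2 * U j ω ∂P := by
      congr 1; ext ω; ring
    have hj : ∫ ω, U i ω * U j ω * U j ω ∂P = ∫ ω, U j ω ^ 2 * U i ω ∂P := by
      congr 1; ext ω; ring
    rw [(hindep.indepFun hij).integral_fun_mul_eq_mul_integral (hU i).aestronglyMeasurable
        (hU j).aestronglyMeasurable,
      hi, hj, (hindep.indepFun hij).integral_sq_mul_eq (hU i) (hU j),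
      (hindep.indepFun hij.symm).integral_sq_mul_eq (hU j) (hU i)]
    ring
  · have h : ∫ ω, U i ω * U j ω * U k ω ∂P = (∫ ω, U i ω * U j ω ∂P) * ∫ ω, U k ω ∂P :=
      (hindep.indepFun_mul_left hU i j k hk.1.symm hk.2.symm).integral_mul_eq_mul_integral
        ((hU i).mul (hU j)).aestronglyMeasurable (hU k).aestronglyMeasurable
    rw [h, sub_self]

lemma iIndepFun.sum_integral_sq_mul_sub_eq (hindep : iIndepFun U P)
    (hU : ∀ k, Measurable (U k)) (i : ι) :
    ∑ k, (∫ ω, U i ω ^ 2 * U k ω ∂P - (∫ ω, U i ω ^ 2 ∂P) * ∫ ω, U k ω ∂P) =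
      ∫ ω, U i ω ^ 3 ∂P - (∫ ω, U i ω ^ 2 ∂P) * ∫ ω, U i ω ∂P := by
  rw [Fintype.sum_eq_single i fun k hk => ?_]
  · simp_rw [← pow_succ]
  · rw [(hindep.indepFun hk.symm).integral_sq_mul_eq (hU i) (hU k), sub_self]

end Independent

end ProbabilityTheory

end Moments

theorem ratio_moment_lower_bounds_general
    {Ω : Type*} [MeasurableSpace Ω] (P : Measure Ω) [IsProbabilityMeasure P]
    (n : ℕ) (U : Fin n → Ω → ℝ)
    (hmeas : ∀ i, Measurable (U i))
    (hnonneg : ∀ i ω, 0 ≤ U i ω)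
    (hindep : iIndepFun U P)
    (hmom : ∀ i, Integrable (fun ω => U i ω ^ 3) P)
    (hsum : ∑ i, ∫ ω, U i ω ∂P = 1)
    (i j : Fin n) (hij : i ≠ j) :
    ((∫ ω, Set.indicator {ω | 0 < ∑ k, U k ω}
        (fun ω => U i ω * U j ω / (∑ k, U k ω) ^ 2) ω ∂P) ≥
      (∫ ω, U i ω ∂P) * (∫ ω, U j ω ∂P)
        - 2 * (∫ ω, U j ω ∂P) * ((∫ ω, U i ω ^ 2 ∂P) - (∫ ω, U i ω ∂P) ^ 2)
        - 2 * (∫ ω, U i ω ∂P) * ((∫ ω, U j ω ^ 2 ∂P) - (∫ ω, U j ω ∂P) ^ 2)) ∧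
    ((∫ ω, Set.indicator {ω | 0 < ∑ k, U k ω}
        (fun ω => U i ω ^ 2 / (∑ k, U k ω) ^ 2) ω ∂P) ≥
      (∫ ω, U i ω ^ 2 ∂P) * (1 + 2 * ∫ ω, U i ω ∂P) - 2 * ∫ ω, U i ω ^ 3 ∂P) := by
  have hle : ∀ k ω, U k ω ≤ ∑ l, U l ω := fun k ω =>
    Finset.single_le_sum (fun l _ => hnonneg l ω) (Finset.mem_univ k)
  have hint2 : ∀ a b, Integrable (fun ω => U a ω * U b ω) P := fun a b =>
    integrable_mul_of_integrable_pow_three (hmeas a).aestronglyMeasurable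
      (hmeas b).aestronglyMeasurable (hnonneg a) (hnonneg b) (hmom a) (hmom b)
  have hint3 : ∀ a b c, Integrable (fun ω => U a ω * U b ω * U c ω) P := fun a b c =>
    integrable_mul_mul_of_integrable_pow_three (hmeas a).aestronglyMeasurable
      (hmeas b).aestronglyMeasurable (hmeas c).aestronglyMeasurable (hnonneg a) (hnonneg b)
      (hnonneg c) (hmom a) (hmom b) (hmom c)
  constructor
  · have h := integral_sub_two_mul_sum_le_integral_indicator_div_sq (f := fun ω => U i ω * U j ω)
      hmeas hnonneg ((hmeas i).mul (hmeas j)) (fun ω => mul_nonneg (hnonneg i ω) (hnonneg j ω))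
      (fun ω => by
        rw [sq]
        exact mul_le_mul (hle i ω) (hle j ω) (hnonneg j ω) ((hnonneg i ω).trans (hle i ω)))
      (hint2 i j) (hint3 i j) hsum
    rw [hindep.sum_integral_mul_mul_sub_eq hmeas hij,
      (hindep.indepFun hij).integral_fun_mul_eq_mul_integral (hmeas i).aestronglyMeasurable
        (hmeas j).aestronglyMeasurable] at h
    linarith
  · have h := integral_sub_two_mul_sum_le_integral_indicator_div_sq (f := fun ω => U i ω ^ 2)
      hmeas hnonneg ((hmeas i).pow_const 2) (fun ω => sq_nonneg _)
      (fun ω => pow_le_pow_left₀ (hnonneg i ω) (hle i ω) 2)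
      (by simpa [sq] using hint2 i i) (fun k => by simpa [sq] using hint3 i i k) hsum
    rw [hindep.sum_integral_sq_mul_sub_eq hmeas i] at h
    linarith

/-- **Lemma 3.1 (CH)**: let `U_1, ..., U_n` (`n ≥ 2`) be independent nonnegative random
variables with finite third moments and `Σ_i m_i = 1` where `m_i = P[U_i]`, and let
`U = Σ_i U_i`. Then, for distinct indices `i, j`:
(i) `P[U_iU_j/U² : U > 0] ≥ m_i m_j - 2 m_j var(U_i) - 2 m_i var(U_j)`; and
(ii) `P[U_i²/U² : U > 0] ≥ P[U_i²](1 + 2 m_i) - 2 P[U_i³]`. -/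
theorem ratio_moment_lower_bounds
    {Ω : Type*} [MeasurableSpace Ω] (P : Measure Ω) [IsProbabilityMeasure P]
    (n : ℕ) (hn : 2 ≤ n) (U : Fin n → Ω → ℝ)
    (hmeas : ∀ i, Measurable (U i))
    (hnonneg : ∀ i ω, 0 ≤ U i ω)
    (hindep : iIndepFun U P)
    (hmom : ∀ i, Integrable (fun ω => U i ω ^ 3) P)
    (hsum : ∑ i, ∫ ω, U i ω ∂P = 1)
    (i j : Fin n) (hij : i ≠ j) :
    ((∫ ω, Set.indicator {ω | 0 < ∑ k, U k ω}
        (fun ω => U i ω * U j ω / (∑ k, U k ω) ^ 2) ω ∂P) ≥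
      (∫ ω, U i ω ∂P) * (∫ ω, U j ω ∂P)
        - 2 * (∫ ω, U j ω ∂P) * ((∫ ω, U i ω ^ 2 ∂P) - (∫ ω, U i ω ∂P) ^ 2)
        - 2 * (∫ ω, U i ω ∂P) * ((∫ ω, U j ω ^ 2 ∂P) - (∫ ω, U j ω ∂P) ^ 2)) ∧
    ((∫ ω, Set.indicator {ω | 0 < ∑ k, U k ω}
        (fun ω => U i ω ^ 2 / (∑ k, U k ω) ^ 2) ω ∂P) ≥
      (∫ ω, U i ω ^ 2 ∂P) * (1 + 2 * ∫ ω, U i ω ∂P) - 2 * ∫ ω, U i ω ^ 3 ∂P) :=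
  ratio_moment_lower_bounds_general P n U hmeas hnonneg hindep hmom hsum i j hij
end

section
/- For the linear stochastic evolution: for every t ∈ ℕ, R_{t,1} ≤ R_t ≤ (|a|²/|a²|) R_{t,1}, where |a²| = Σ_{y∈Z^d} a_y². -/
/-!
Write `ρ = ρ_t` and `ā = a / |a|`, a probability weight, so that `ρ_{t,1}(x) = Σ_y ā(y) ρ(x - y)`
is an average of translates of `ρ`, each of which has the same `ℓ²`-norm as `ρ`. Jensen's
inequality for `s ↦ s²` then gives `R_{t,1} ≤ R_t`. Expanding the square instead and discarding
the cross terms, which are nonnegative, leaves `R_{t,1} ≥ Σ_y ā(y)² R_t = (|a²| / |a|²) R_t`.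
Finite range makes `ā` and, almost surely, `ρ_t` finitely supported, and `|a| > 0` because `A_1`
is nonnegative and not almost surely zero.
-/

open MeasureTheory ProbabilityTheory Filter Topology
open scoped ENNReal NNReal

namespace LSE

/-- The lattice `ℤ^d`. -/
abbrev Zd (d : ℕ) := Fin d → ℤ

/-- The ℓ¹-norm on `ℤ^d`. -/
def l1 {d : ℕ} (x : Zd d) : ℕ := ∑ i, (x i).natAbs

variable {d : ℕ} {Ω : Type*}

/-- The linear stochastic evolution `N_t`, started from a single particle at the origin:
`N_{t,y} = Σ_x N_{t-1,x} A_{t,x,y}`. -/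
noncomputable def Np (A : ℕ → Zd d → Zd d → Ω → ℝ) : ℕ → Zd d → Ω → ℝ
  | 0 => fun x _ => if x = 0 then 1 else 0
  | t + 1 => fun y ω => ∑' x, Np A t x ω * A (t + 1) x y ω

/-- `|N_t| = Σ_y N_{t,y}`. -/
noncomputable def Ntot (A : ℕ → Zd d → Zd d → Ω → ℝ) (t : ℕ) (ω : Ω) : ℝ :=
  ∑' y, Np A t y ω

/-- The population density `ρ_t(x)`. -/
noncomputable def dens (A : ℕ → Zd d → Zd d → Ω → ℝ) (t : ℕ) (x : Zd d) (ω : Ω) : ℝ :=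
  if 0 < Ntot A t ω then Np A t x ω / Ntot A t ω else 0

/-- The replica overlap `R_t = Σ_x ρ_t(x)²`. -/
noncomputable def overlap (A : ℕ → Zd d → Zd d → Ω → ℝ) (t : ℕ) (ω : Ω) : ℝ :=
  ∑' x, dens A t x ω ^ 2

/-- The event of survival: `|N_t| > 0` for all `t`. -/
def survival (A : ℕ → Zd d → Zd d → Ω → ℝ) : Set Ω := {ω | ∀ t, 0 < Ntot A t ω}

/-- `a_y = P[A_{1,0,y}]`. -/
noncomputable def aCoef [MeasurableSpace Ω] (P : Measure Ω) (A : ℕ → Zd d → Zd d → Ω → ℝ)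
    (y : Zd d) : ℝ := ∫ ω, A 1 0 y ω ∂P

/-- `|a| = Σ_y a_y`. -/
noncomputable def aTot [MeasurableSpace Ω] (P : Measure Ω) (A : ℕ → Zd d → Zd d → Ω → ℝ) : ℝ :=
  ∑' y, aCoef P A y

/-- The normalized total population `|N̄_t| = |a|^{-t} |N_t|`. -/
noncomputable def Nbar [MeasurableSpace Ω] (P : Measure Ω) (A : ℕ → Zd d → Zd d → Ω → ℝ)
    (t : ℕ) (ω : Ω) : ℝ := Ntot A t ω / aTot P A ^ t

/-- The σ-field `F_t` generated by `A_1, ..., A_t`. -/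
def Filt [MeasurableSpace Ω] (A : ℕ → Zd d → Zd d → Ω → ℝ) (t : ℕ) : MeasurableSpace Ω :=
  ⨆ s ∈ Finset.Icc 1 t,
    MeasurableSpace.comap (fun ω => fun x y => A s x y ω) MeasurableSpace.pi

/-- The standing assumptions on the i.i.d. random matrices `A_t`; the parameter `p` is the
moment assumption (`p = 3` in most statements, `p = 2` in the weakened one). -/
structure Setting [MeasurableSpace Ω] (P : Measure Ω) (A : ℕ → Zd d → Zd d → Ω → ℝ)
    (p : ℝ≥0∞) : Prop where
  /-- measurability of the entries -/
  meas : ∀ t x y, Measurable fun ω => A t x y ω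
  /-- the entries are nonnegative -/
  nonneg : ∀ t x y ω, 0 ≤ A t x y ω
  /-- the matrices `A_1, A_2, ...` are independent -/
  indep : iIndepFun (fun t ω => fun x y => A (t + 1) x y ω) P
  /-- the matrices `A_1, A_2, ...` are identically distributed -/
  ident : ∀ t : ℕ, IdentDistrib (fun ω => fun x y => A (t + 1) x y ω)
      (fun ω => fun x y => A 1 x y ω) P P
  /-- `A_1` is not a constant (deterministic) matrix -/
  notConst : ¬ ∃ C : Zd d → Zd d → ℝ, ∀ᵐ ω ∂P, ∀ x y, A 1 x y ω = C x y
  /-- the columns of `A_1` are independent -/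
  colIndep : iIndepFun (fun (y : Zd d) ω => fun x => A 1 x y ω) P
  /-- the `p`-th moments are finite -/
  mom : ∀ x y, MemLp (fun ω => A 1 x y ω) p P
  /-- finite range `r_A` -/
  finRange : ∃ r : ℕ, ∀ t x y, r < l1 (x - y) → ∀ᵐ ω ∂P, A t x y ω = 0
  /-- shift invariance in law -/
  shift : ∀ z : Zd d, IdentDistrib (fun ω => fun x y => A 1 (x + z) (y + z) ω)
      (fun ω => fun x y => A 1 x y ω) P P
  /-- the set `{x : Σ_y a_{x+y} a_y ≠ 0}` contains a linear basis of `ℝ^d` -/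
  irred : ∃ v : Fin d → Zd d, (∀ i, ∑' y, aCoef P A (v i + y) * aCoef P A y ≠ 0) ∧
      LinearIndependent ℝ fun i => fun j : Fin d => ((v i j : ℝ))

/-- Condition (covA) with constant `γ`. -/
def CovA [MeasurableSpace Ω] (P : Measure Ω) (A : ℕ → Zd d → Zd d → Ω → ℝ) (γ : ℝ) : Prop :=
  ∀ ξ : Zd d → ℝ, (∀ x, 0 ≤ ξ x) → Summable ξ →
    0 ≤ ∑' (x : Zd d) (x' : Zd d) (y : Zd d),
      ((∫ ω, A 1 x y ω * A 1 x' y ω ∂P) - γ * aCoef P A (y - x) * aCoef P A (y - x'))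
        * ξ x * ξ x'

/-- Convolution of two functions on `ℤ^d`. -/
noncomputable def conv {d : ℕ} (f g : Zd d → ℝ) (x : Zd d) : ℝ := ∑' y, f (x - y) * g y

/-- The smoothed density `ρ_{t,1} = ρ_t * ā` where `ā(x) = a_x / |a|`. -/
noncomputable def dens1 [MeasurableSpace Ω] (P : Measure Ω) (A : ℕ → Zd d → Zd d → Ω → ℝ)
    (t : ℕ) (x : Zd d) (ω : Ω) : ℝ :=
  ∑' y, dens A t (x - y) ω * (aCoef P A y / aTot P A)

/-- The smoothed replica overlap `R_{t,1} = |ρ_{t,1}²|`. -/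
noncomputable def overlap1 [MeasurableSpace Ω] (P : Measure Ω) (A : ℕ → Zd d → Zd d → Ω → ℝ)
    (t : ℕ) (ω : Ω) : ℝ := ∑' x, dens1 P A t x ω ^ 2

/-- `b(x) = |a|⁻² Σ_y a_y a_{y-x}`. -/
noncomputable def bFn [MeasurableSpace Ω] (P : Measure Ω) (A : ℕ → Zd d → Zd d → Ω → ℝ)
    (x : Zd d) : ℝ := (∑' y, aCoef P A y * aCoef P A (y - x)) / aTot P A ^ 2

/-- `t`-fold convolution power: `bIter b t = b_t` for `t ≥ 1`. -/
noncomputable def bIter {d : ℕ} (b : Zd d → ℝ) : ℕ → Zd d → ℝ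
  | 0 => fun x => if x = 0 then 1 else 0
  | t + 1 => conv b (bIter b t)

/-- `g = Σ_{s=1}^{t₀} b_s`. -/
noncomputable def gFn [MeasurableSpace Ω] (P : Measure Ω) (A : ℕ → Zd d → Zd d → Ω → ℝ)
    (t₀ : ℕ) (x : Zd d) : ℝ := ∑ s ∈ Finset.Icc 1 t₀, bIter (bFn P A) s x

/-- `X_t = ⟨g * ρ_t, ρ_t⟩`. -/
noncomputable def Xproc [MeasurableSpace Ω] (P : Measure Ω) (A : ℕ → Zd d → Zd d → Ω → ℝ)
    (t₀ : ℕ) (t : ℕ) (ω : Ω) : ℝ :=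
  ∑' (x : Zd d) (y : Zd d), gFn P A t₀ (x - y) * dens A t x ω * dens A t y ω

/-- The compensator in Doob's decomposition `X_t = M_t + A_t`:
`A_0 = 0`, `ΔA_t = P[ΔX_t | F_{t-1}]`. -/
noncomputable def doobA [MeasurableSpace Ω] (P : Measure Ω) (A : ℕ → Zd d → Zd d → Ω → ℝ)
    (t₀ : ℕ) : ℕ → Ω → ℝ
  | 0 => fun _ => 0
  | t + 1 => fun ω => doobA P A t₀ t ω +
      (P[fun ω => Xproc P A t₀ (t + 1) ω - Xproc P A t₀ t ω | Filt A t]) ω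

open Function

section Smoothing

variable {G : Type*} [AddCommGroup G] {ρ w : G → ℝ}

theorem tsum_sq_comp_sub (y : G) : ∑' x, ρ (x - y) ^ 2 = ∑' x, ρ x ^ 2 :=
  (Equiv.subRight y).tsum_eq fun x => ρ x ^ 2

theorem summable_sq_comp_sub (hρ : Summable fun x => ρ x ^ 2) (y : G) :
    Summable fun x => ρ (x - y) ^ 2 :=
  (Equiv.subRight y).summable_iff.mpr hρ

theorem tsum_sum_sq_comp_sub_mul (hρ : Summable fun x => ρ x ^ 2) (W : Finset G) (v : G → ℝ) :
    ∑' x, ∑ y ∈ W, ρ (x - y) ^ 2 * v y = (∑ y ∈ W, v y) * ∑' x, ρ x ^ 2 := by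
  rw [Summable.tsum_finsetSum fun y _ => (summable_sq_comp_sub hρ y).mul_right (v y),
    Finset.sum_mul]
  refine Finset.sum_congr rfl fun y _ => ?_
  rw [tsum_mul_right, tsum_sq_comp_sub, mul_comm]

theorem summable_sq_sum_comp_sub_mul (hρ : Summable fun x => ρ x ^ 2) (W : Finset G) :
    Summable fun x => (∑ y ∈ W, ρ (x - y) * w y) ^ 2 := by
  have hbound : Summable fun x => (W.card : ℝ) * ∑ y ∈ W, ρ (x - y) ^ 2 * w y ^ 2 :=
    (summable_sum fun y _ => (summable_sq_comp_sub hρ y).mul_right _).mul_left _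
  refine hbound.of_nonneg_of_le (fun x => sq_nonneg _) fun x => ?_
  simpa only [mul_pow] using sq_sum_le_card_mul_sum_sq (s := W) (f := fun y => ρ (x - y) * w y)

theorem tsum_comp_sub_mul_eq_sum {W : Finset G} (hW : support w ⊆ W) (x : G) :
    ∑' y, ρ (x - y) * w y = ∑ y ∈ W, ρ (x - y) * w y :=
  tsum_eq_sum' <| (support_mul_subset_right _ _).trans hW

theorem tsum_sq_tsum_comp_sub_mul_le (hρ : Summable fun x => ρ x ^ 2) (hw0 : ∀ y, 0 ≤ w y)
    (hw : (support w).Finite) (hw1 : ∑' y, w y = 1) :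
    ∑' x, (∑' y, ρ (x - y) * w y) ^ 2 ≤ ∑' x, ρ x ^ 2 := by
  set W := hw.toFinset
  have hW1 : ∑ y ∈ W, w y = 1 := (tsum_eq_sum' hw.coe_toFinset.symm.subset).symm.trans hw1
  have hjensen : ∀ x, (∑ y ∈ W, ρ (x - y) * w y) ^ 2 ≤ ∑ y ∈ W, ρ (x - y) ^ 2 * w y := by
    intro x
    simpa only [mul_comm (w _)] using
      Real.pow_arith_mean_le_arith_mean_pow_of_even W w (fun y => ρ (x - y))
        (fun y _ => hw0 y) hW1 even_two
  simp_rw [tsum_comp_sub_mul_eq_sum hw.coe_toFinset.symm.subset]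
  calc ∑' x, (∑ y ∈ W, ρ (x - y) * w y) ^ 2
      ≤ ∑' x, ∑ y ∈ W, ρ (x - y) ^ 2 * w y :=
        Summable.tsum_le_tsum hjensen (summable_sq_sum_comp_sub_mul hρ W)
          (summable_sum fun y _ => (summable_sq_comp_sub hρ y).mul_right _)
    _ = ∑' x, ρ x ^ 2 := by rw [tsum_sum_sq_comp_sub_mul hρ, hW1, one_mul]

theorem tsum_sq_mul_tsum_sq_le_tsum_sq_tsum_comp_sub_mul (hρ0 : ∀ x, 0 ≤ ρ x)
    (hρ : Summable fun x => ρ x ^ 2) (hw0 : ∀ y, 0 ≤ w y) (hw : (support w).Finite) :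
    (∑' y, w y ^ 2) * ∑' x, ρ x ^ 2 ≤ ∑' x, (∑' y, ρ (x - y) * w y) ^ 2 := by
  set W := hw.toFinset
  have hW2 : ∑' y, w y ^ 2 = ∑ y ∈ W, w y ^ 2 :=
    tsum_eq_sum' <| (support_pow w two_ne_zero).trans_subset hw.coe_toFinset.symm.subset
  have hdiag : ∀ x, ∑ y ∈ W, ρ (x - y) ^ 2 * w y ^ 2 ≤ (∑ y ∈ W, ρ (x - y) * w y) ^ 2 := by
    intro x
    simpa only [mul_pow] using
      Finset.sum_sq_le_sq_sum_of_nonneg fun y _ => mul_nonneg (hρ0 (x - y)) (hw0 y)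
  simp_rw [tsum_comp_sub_mul_eq_sum hw.coe_toFinset.symm.subset, hW2]
  calc (∑ y ∈ W, w y ^ 2) * ∑' x, ρ x ^ 2
      = ∑' x, ∑ y ∈ W, ρ (x - y) ^ 2 * w y ^ 2 := (tsum_sum_sq_comp_sub_mul hρ W _).symm
    _ ≤ ∑' x, (∑ y ∈ W, ρ (x - y) * w y) ^ 2 :=
        Summable.tsum_le_tsum hdiag
          (summable_sum fun y _ => (summable_sq_comp_sub hρ y).mul_right _)
          (summable_sq_sum_comp_sub_mul hρ W)

end Smoothing

theorem l1_sub_le (x y : Zd d) : l1 (x - y) ≤ l1 x + l1 y := by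
  simp only [l1, ← Finset.sum_add_distrib]
  exact Finset.sum_le_sum fun i _ => Int.natAbs_sub_le (x i) (y i)

theorem l1_zero_sub (y : Zd d) : l1 (0 - y) = l1 y := by
  simp [l1]

theorem finite_setOf_l1_le (M : ℕ) : {x : Zd d | l1 x ≤ M}.Finite := by
  refine (Set.finite_Icc (fun _ => -(M : ℤ)) fun _ => M).subset fun x hx => ?_
  have hcoord : ∀ i, (x i).natAbs ≤ M := fun i =>
    (Finset.single_le_sum (fun j _ => Nat.zero_le (x j).natAbs) (Finset.mem_univ i)).trans hx
  refine ⟨fun i => ?_, fun i => ?_⟩ <;> dsimp only <;> have := hcoord i <;> omega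

section Evolution

variable {A : ℕ → Zd d → Zd d → Ω → ℝ}

theorem Np_nonneg (hA : ∀ t x y ω, 0 ≤ A t x y ω) (t : ℕ) (x : Zd d) (ω : Ω) :
    0 ≤ Np A t x ω := by
  induction t generalizing x with
  | zero => unfold Np; positivity
  | succ t ih => exact tsum_nonneg fun z => mul_nonneg (ih z) (hA (t + 1) z x ω)

theorem Np_eq_zero_of_lt_l1 {r : ℕ} {ω : Ω} (hA : ∀ t x y, r < l1 (x - y) → A t x y ω = 0)
    {t : ℕ} {y : Zd d} (hy : t * r < l1 y) : Np A t y ω = 0 := by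
  induction t generalizing y with
  | zero =>
    have hy0 : y ≠ 0 := by rintro rfl; simp [l1] at hy
    simp [Np, hy0]
  | succ t ih =>
    have hterm : ∀ x, Np A t x ω * A (t + 1) x y ω = 0 := by
      intro x
      by_cases hx : t * r < l1 x
      · rw [ih hx, zero_mul]
      · have htri : l1 y ≤ l1 x + l1 (x - y) := by simpa using l1_sub_le x (x - y)
        rw [hA (t + 1) x y (by rw [Nat.succ_mul] at hy; omega), mul_zero]
    simp [Np, hterm]

theorem dens_nonneg (hA : ∀ t x y ω, 0 ≤ A t x y ω) (t : ℕ) (x : Zd d) (ω : Ω) :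
    0 ≤ dens A t x ω := by
  unfold dens
  split_ifs with hN
  · exact div_nonneg (Np_nonneg hA t x ω) hN.le
  · exact le_rfl

theorem support_dens_finite {r : ℕ} {ω : Ω} (hA : ∀ t x y, r < l1 (x - y) → A t x y ω = 0)
    (t : ℕ) : (support fun x => dens A t x ω).Finite := by
  refine (finite_setOf_l1_le (t * r)).subset fun x hx => ?_
  by_contra hlt
  refine hx ?_
  simp [dens, Np_eq_zero_of_lt_l1 hA (not_le.mp hlt)]

end Evolution

section Coefficients

variable [MeasurableSpace Ω] {P : Measure Ω} {A : ℕ → Zd d → Zd d → Ω → ℝ}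
  {p : ℝ≥0∞}

theorem aCoef_nonneg (hset : Setting P A p) (y : Zd d) : 0 ≤ aCoef P A y :=
  integral_nonneg fun ω => hset.nonneg 1 0 y ω

theorem integral_eq_aCoef (hset : Setting P A p) (x y : Zd d) :
    ∫ ω, A 1 x y ω ∂P = aCoef P A (y - x) := by
  have hcoord : Measurable fun f : Zd d → Zd d → ℝ => f 0 (y - x) :=
    (measurable_pi_apply (y - x)).comp (measurable_pi_apply 0)
  simpa [Function.comp_def, aCoef] using ((hset.shift x).comp hcoord).integral_eq

theorem support_aCoef_finite (hset : Setting P A p) : (support (aCoef P A)).Finite := by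
  obtain ⟨r, hr⟩ := hset.finRange
  refine (finite_setOf_l1_le r).subset fun y hy => ?_
  by_contra hlt
  refine hy (integral_eq_zero_of_ae ?_)
  exact hr 1 0 y (by rw [l1_zero_sub]; exact not_le.mp hlt)

theorem exists_aCoef_pos [IsFiniteMeasure P] (hset : Setting P A p) (hp : 1 ≤ p) :
    ∃ y, 0 < aCoef P A y := by
  by_contra! hzero
  refine hset.notConst ⟨0, ?_⟩
  simp only [ae_all_iff]
  intro x y
  have hint : ∫ ω, A 1 x y ω ∂P = 0 :=
    (integral_eq_aCoef hset x y).trans ((hzero _).antisymm (aCoef_nonneg hset _))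
  exact (integral_eq_zero_iff_of_nonneg (hset.nonneg 1 x y) ((hset.mom x y).integrable hp)).1 hint

theorem aTot_pos [IsFiniteMeasure P] (hset : Setting P A p) (hp : 1 ≤ p) : 0 < aTot P A := by
  obtain ⟨y, hy⟩ := exists_aCoef_pos hset hp
  exact (summable_of_hasFiniteSupport (support_aCoef_finite hset)).tsum_pos
    (aCoef_nonneg hset) y hy

theorem tsum_aCoef_sq_pos [IsFiniteMeasure P] (hset : Setting P A p) (hp : 1 ≤ p) :
    0 < ∑' y, aCoef P A y ^ 2 := by
  obtain ⟨y, hy⟩ := exists_aCoef_pos hset hp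
  have hsupp : (support fun y => aCoef P A y ^ 2).Finite :=
    (support_aCoef_finite hset).subset (support_pow (aCoef P A) two_ne_zero).subset
  exact (summable_of_hasFiniteSupport hsupp).tsum_pos (fun y => sq_nonneg _) y (pow_pos hy 2)

theorem ae_finRange {r : ℕ} (hr : ∀ t x y, r < l1 (x - y) → ∀ᵐ ω ∂P, A t x y ω = 0) :
    ∀ᵐ ω ∂P, ∀ t x y, r < l1 (x - y) → A t x y ω = 0 := by
  simpa only [ae_all_iff, eventually_imp_distrib_left] using hr

end Coefficients

theorem overlap1_le_overlap_le_general
    (d : ℕ) {Ω : Type*} [MeasurableSpace Ω] (P : Measure Ω)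
    [IsProbabilityMeasure P] (A : ℕ → Zd d → Zd d → Ω → ℝ)
    (hset : Setting P A 3) :
    ∀ t : ℕ, ∀ᵐ ω ∂P,
      overlap1 P A t ω ≤ overlap A t ω ∧
      overlap A t ω ≤ (aTot P A ^ 2 / ∑' y, aCoef P A y ^ 2) * overlap1 P A t ω := by
  intro t
  obtain ⟨r, hr⟩ := hset.finRange
  have haTot := aTot_pos hset (by norm_num)
  set w : Zd d → ℝ := fun y => aCoef P A y / aTot P A
  have hw0 : ∀ y, 0 ≤ w y := fun y => div_nonneg (aCoef_nonneg hset y) haTot.le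
  have hw : (support w).Finite :=
    (support_aCoef_finite hset).subset ((support_div _ _).trans_subset Set.inter_subset_left)
  have hw1 : ∑' y, w y = 1 := by rw [tsum_div_const]; exact div_self haTot.ne'
  have hw2 : ∑' y, w y ^ 2 = (∑' y, aCoef P A y ^ 2) / aTot P A ^ 2 := by
    simp_rw [w, div_pow]; exact tsum_div_const
  filter_upwards [ae_finRange hr] with ω hω
  have hρ0 := fun x => dens_nonneg hset.nonneg t x ω
  have hρ : Summable fun x => dens A t x ω ^ 2 := summable_of_hasFiniteSupport <|
    (support_dens_finite hω t).subset (support_pow (fun x => dens A t x ω) two_ne_zero).subset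
  refine ⟨tsum_sq_tsum_comp_sub_mul_le hρ hw0 hw hw1, ?_⟩
  rw [← inv_div, le_inv_mul_iff₀ (div_pos (tsum_aCoef_sq_pos hset (by norm_num)) (by positivity)),
    ← hw2]
  exact tsum_sq_mul_tsum_sq_le_tsum_sq_tsum_comp_sub_mul hρ0 hρ hw0 hw

/-- **Lemma 3.2**: for the linear stochastic evolution, for every `t`,
`R_{t,1} ≤ R_t ≤ (|a|²/|a²|) R_{t,1}` almost surely, where `|a²| = Σ_y a_y²`. -/
theorem overlap1_le_overlap_le
    (d : ℕ) (hd : 1 ≤ d) {Ω : Type*} [MeasurableSpace Ω] (P : Measure Ω)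
    [IsProbabilityMeasure P] (A : ℕ → Zd d → Zd d → Ω → ℝ)
    (hset : Setting P A 3) :
    ∀ t : ℕ, ∀ᵐ ω ∂P,
      overlap1 P A t ω ≤ overlap A t ω ∧
      overlap A t ω ≤ (aTot P A ^ 2 / ∑' y, aCoef P A y ^ 2) * overlap1 P A t ω :=
  overlap1_le_overlap_le_general d P A hset

end LSE
end
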